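/- arXiv:1610.04686 — 6 statements merged into one kernel-verified Lean document; each statement's English description precedes it below -/
import Mathlib

section
/- For any real square matrix A with μ(A) := λ_max((A+A')/2), and all t ≥ 0, the spectral norm satisfies ‖exp(tA)‖₂ ≤ exp(t·μ(A)). -/
/-!
The symmetric part `S = (A + Aᵀ)/2` has the same quadratic form as `A`, and `S ≤ λ_max(S) • 1`
in the Loewner order, so `⟪x, A x⟫ ≤ μ ‖x‖²` with `μ = λ_max(S)`. Along a trajectory
`f u = exp (u A) x` this gives `(‖f‖²)' = 2 ⟪f, A f⟫ ≤ 2 μ ‖f‖²`, and Grönwall's inequality yields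
`‖exp (t A) x‖ ≤ exp (t μ) ‖x‖` for `t ≥ 0`.
-/

open Matrix

/-- The largest eigenvalue of a real symmetric (Hermitian) matrix. -/
noncomputable def lamMax {r : ℕ} {A : Matrix (Fin r) (Fin r) ℝ} (hA : A.IsHermitian) : ℝ :=
  ⨆ i, hA.eigenvalues i

/-- The spectral (ℓ²-operator) norm of a real matrix. -/
noncomputable def specNorm {r : ℕ} (A : Matrix (Fin r) (Fin r) ℝ) : ℝ :=
  ‖LinearMap.toContinuousLinearMap (Matrix.toEuclideanLin A)‖

open scoped RealInnerProductSpace MatrixOrder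

theorem norm_le_exp_mul_norm_of_inner_deriv_le {E : Type*} [NormedAddCommGroup E]
    [InnerProductSpace ℝ E] {f f' : ℝ → E} {μ : ℝ} (hf : ∀ u, HasDerivAt f (f' u) u)
    (hμ : ∀ u, ⟪f u, f' u⟫ ≤ μ * ‖f u‖ ^ 2) {t : ℝ} (ht : 0 ≤ t) :
    ‖f t‖ ≤ Real.exp (μ * t) * ‖f 0‖ := by
  have hsq : ‖f t‖ ^ 2 ≤ ‖f 0‖ ^ 2 * Real.exp (2 * μ * t) := by
    have := le_gronwallBound_of_liminf_deriv_right_le (f := fun u => ‖f u‖ ^ 2)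
      (f' := fun u => 2 * ⟪f u, f' u⟫) (K := 2 * μ) (ε := 0) (a := 0) (b := t)
      (fun u _ => (hf u).norm_sq.continuousAt.continuousWithinAt)
      (fun u _ _ hr => (hf u).norm_sq.hasDerivWithinAt.liminf_right_slope_le hr) le_rfl
      (fun u _ => by linarith [hμ u]) t ⟨ht, le_rfl⟩
    rwa [gronwallBound_ε0, sub_zero] at this
  rw [← pow_le_pow_iff_left₀ (norm_nonneg _) (by positivity) two_ne_zero]
  calc ‖f t‖ ^ 2 ≤ ‖f 0‖ ^ 2 * Real.exp (2 * μ * t) := hsq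
    _ = (Real.exp (μ * t) * ‖f 0‖) ^ 2 := by rw [mul_pow, ← Real.exp_nat_mul]; ring_nf

theorem ContinuousLinearMap.norm_exp_smul_le_of_inner_le {E : Type*} [NormedAddCommGroup E]
    [InnerProductSpace ℝ E] [CompleteSpace E] {T : E →L[ℝ] E} {μ : ℝ}
    (hT : ∀ x, ⟪x, T x⟫ ≤ μ * ‖x‖ ^ 2) {t : ℝ} (ht : 0 ≤ t) :
    ‖NormedSpace.exp (t • T)‖ ≤ Real.exp (t * μ) := by
  refine opNorm_le_bound _ (Real.exp_nonneg _) fun x => ?_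
  have hderiv (u : ℝ) : HasDerivAt (fun v : ℝ => NormedSpace.exp (v • T) x)
      (T (NormedSpace.exp (u • T) x)) u :=
    (hasDerivAt_exp_smul_const' T u).clm_apply (hasDerivAt_const u x) |>.congr_deriv (by simp)
  simpa [mul_comm μ] using norm_le_exp_mul_norm_of_inner_deriv_le hderiv (fun u => hT _) ht

theorem Matrix.IsHermitian.le_algebraMap_iSup_eigenvalues {n 𝕜 : Type*} [RCLike 𝕜] [Fintype n]
    [DecidableEq n] {B : Matrix n n 𝕜} (hB : B.IsHermitian) :
    B ≤ algebraMap ℝ (Matrix n n 𝕜) (⨆ i, hB.eigenvalues i) := by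
  refine le_algebraMap_of_spectrum_le (fun x hx => ?_) hB
  obtain ⟨i, rfl⟩ := hB.spectrum_real_eq_range_eigenvalues ▸ hx
  exact le_ciSup (Finite.bddAbove_range _) i

theorem Matrix.inner_toEuclideanCLM_le_of_le_algebraMap {n : Type*} [Fintype n] [DecidableEq n]
    {B : Matrix n n ℝ} {c : ℝ} (h : B ≤ algebraMap ℝ (Matrix n n ℝ) c) (x : EuclideanSpace ℝ n) :
    ⟪x, toEuclideanCLM (𝕜 := ℝ) B x⟫ ≤ c * ‖x‖ ^ 2 := by
  have := (Matrix.le_iff.mp h).dotProduct_mulVec_nonneg x.ofLp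
  rw [inner_toEuclideanCLM, ← real_inner_self_eq_norm_sq, EuclideanSpace.inner_eq_star_dotProduct]
  simpa [sub_mulVec, Algebra.algebraMap_eq_smul_one, smul_mulVec] using this

theorem Matrix.inner_toEuclideanCLM_symmPart {n : Type*} [Fintype n] [DecidableEq n]
    (A : Matrix n n ℝ) (x : EuclideanSpace ℝ n) :
    ⟪x, toEuclideanCLM (𝕜 := ℝ) (((1 : ℝ) / 2) • (A + Aᵀ)) x⟫ =
      ⟪x, toEuclideanCLM (𝕜 := ℝ) A x⟫ := by
  have hT : x.ofLp ⬝ᵥ Aᵀ *ᵥ x.ofLp = x.ofLp ⬝ᵥ A *ᵥ x.ofLp := by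
    rw [dotProduct_mulVec, vecMul_transpose, dotProduct_comm]
  simp only [inner_toEuclideanCLM, smul_mulVec, add_mulVec, dotProduct_smul, dotProduct_add, hT,
    smul_eq_mul]
  ring

theorem Matrix.toEuclideanCLM_exp {n 𝕜 : Type*} [RCLike 𝕜] [Fintype n] [DecidableEq n]
    (M : Matrix n n 𝕜) :
    toEuclideanCLM (n := n) (𝕜 := 𝕜) (NormedSpace.exp M) =
      NormedSpace.exp (toEuclideanCLM (n := n) (𝕜 := 𝕜) M) := by
  -- `exp` only sees the topology; a normed algebra structure is needed just to apply `map_exp`.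
  open scoped Matrix.Norms.L2Operator in
  have : NormedAlgebra ℚ (Matrix n n 𝕜) := NormedAlgebra.restrictScalars ℚ 𝕜 _
  exact NormedSpace.map_exp toEuclideanCLM (LinearMap.continuous_of_finiteDimensional
    (toEuclideanCLM (n := n) (𝕜 := 𝕜)).toAlgEquiv.toLinearMap) M

/-- `‖exp(tA)‖₂ ≤ exp(t μ(A))` where `μ(A) = λ_max((A+Aᵀ)/2)` is the logarithmic norm. -/
theorem exp_specNorm_le_exp_logNorm (r : ℕ) (A : Matrix (Fin r) (Fin r) ℝ)
    (hsym : (((1 : ℝ)/2) • (A + Aᵀ)).IsHermitian) :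
    ∀ t : ℝ, 0 ≤ t →
      specNorm (NormedSpace.exp (t • A)) ≤ Real.exp (t * lamMax hsym) := by
  intro t ht
  have hA (x : EuclideanSpace ℝ (Fin r)) :
      ⟪x, toEuclideanCLM (𝕜 := ℝ) A x⟫ ≤ lamMax hsym * ‖x‖ ^ 2 := by
    rw [← inner_toEuclideanCLM_symmPart]
    exact inner_toEuclideanCLM_le_of_le_algebraMap hsym.le_algebraMap_iSup_eigenvalues x
  have hspec : specNorm (NormedSpace.exp (t • A)) =
      ‖NormedSpace.exp (t • toEuclideanCLM (𝕜 := ℝ) A)‖ := by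
    rw [← map_smul, ← toEuclideanCLM_exp]; rfl
  exact hspec ▸ ContinuousLinearMap.norm_exp_smul_le_of_inner_le hA ht
end

section
/- Let φ_t(Q) denote the solution at time t of the differential Riccati equation ∂_t P_t = A_t P_t + P_t A_t' − P_t S_t P_t + R1 with P_0 = Q, where S_t is positive semi-definite for all t and R1 is positive definite. Then for all 0 ≤ s ≤ t, φ_t(Q1) − φ_t(Q2) = E_{s,t}(Q1,Q2) [φ_s(Q1) − φ_s(Q2)] E_{s,t}(Q1,Q2)', where E_{s,t}(Q1,Q2) is the transition matrix generated by the time-varying matrix flow u ↦ A_u − ((φ_u(Q1)+φ_u(Q2))/2) S_u. -/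
/-!
The difference `Δ = φ1 - φ2` of two solutions of the Riccati equation solves the linear Lyapunov
equation `Δ' = F Δ + Δ Fᵀ` with `F = A - ½ (φ1 + φ2) S`: the quadratic terms factor because
`S`, `φ1` and `φ2` are symmetric. Since `E_{s,·}` is the transition matrix of `F`, the curve
`u ↦ E_{s,u} Δ_s E_{s,u}ᵀ` solves the same equation and agrees with `Δ` at `u = s`; uniqueness for
linear equations with continuous coefficients (Grönwall) makes the two agree for `u ≥ s`.
-/

open Matrix

attribute [local instance] Matrix.normedAddCommGroup Matrix.normedSpace

open Set

/- `HasDerivAt` for matrix-valued functions elaborates with `Matrix.addCommGroup`, `Matrix.module`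
and `instTopologicalSpaceMatrix`, to which `Matrix.normedAddCommGroup` and `Matrix.normedSpace`
reduce only after unfolding; these copies project onto them syntactically. -/
@[reducible] noncomputable def Matrix.normedAddCommGroupPi {n : Type*} [Fintype n] :
    NormedAddCommGroup (Matrix n n ℝ) :=
  { Matrix.normedAddCommGroup with
    toAddCommGroup := Matrix.addCommGroup
    toUniformSpace :=
      { Matrix.normedAddCommGroup.toUniformSpace with
        toTopologicalSpace := instTopologicalSpaceMatrix } }

attribute [local instance] Matrix.normedAddCommGroupPi

@[reducible] noncomputable def Matrix.normedSpacePi {n : Type*} [Fintype n] :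
    NormedSpace ℝ (Matrix n n ℝ) :=
  { toModule := Matrix.module
    norm_smul_le := Matrix.normedSpace.norm_smul_le }

attribute [local instance] Matrix.normedSpacePi

section LinearODE

variable {E : Type*} [NormedAddCommGroup E] [NormedSpace ℝ E]

theorem eqOn_zero_of_hasDerivWithinAt_clm_apply {L : ℝ → E →L[ℝ] E} {H : ℝ → E} {a b : ℝ}
    (hL : ContinuousOn L (Icc a b)) (hH : ContinuousOn H (Icc a b))
    (hH' : ∀ t ∈ Ico a b, HasDerivWithinAt H (L t (H t)) (Ici t) t) (ha : H a = 0) :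
    EqOn H 0 (Icc a b) := by
  obtain ⟨K, hK⟩ := isCompact_Icc.exists_bound_of_continuousOn hL
  have hLip : ∀ t ∈ Ico a b, LipschitzOnWith K.toNNReal (L t) univ := fun t ht =>
    ((L t).lipschitz.weaken <| by
      rw [← NNReal.coe_le_coe, coe_nnnorm, Real.coe_toNNReal']
      exact (hK t (Ico_subset_Icc_self ht)).trans (le_max_left _ _)).lipschitzOnWith
  refine ODE_solution_unique_of_mem_Icc_right hLip hH hH' (fun _ _ => mem_univ _)
    continuousOn_const (fun t _ => ?_) (fun _ _ => mem_univ _) ha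
  simpa using hasDerivWithinAt_zero (𝕜 := ℝ) (F := E) t (Ici t)

end LinearODE

namespace Matrix

variable {n : Type*} [Fintype n]

noncomputable def mulCLM : Matrix n n ℝ →L[ℝ] Matrix n n ℝ →L[ℝ] Matrix n n ℝ :=
  LinearMap.toContinuousLinearMap
    (LinearMap.toContinuousLinearMap.toLinearMap ∘ₗ LinearMap.mul ℝ (Matrix n n ℝ))

@[simp] lemma mulCLM_apply (A B : Matrix n n ℝ) : mulCLM A B = A * B := rfl

noncomputable def transposeCLM : Matrix n n ℝ →L[ℝ] Matrix n n ℝ :=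
  LinearMap.toContinuousLinearMap
    { toFun := transpose, map_add' := transpose_add, map_smul' := transpose_smul }

noncomputable def lyapunovCLM : Matrix n n ℝ →L[ℝ] Matrix n n ℝ →L[ℝ] Matrix n n ℝ :=
  LinearMap.toContinuousLinearMap <| LinearMap.toContinuousLinearMap.toLinearMap ∘ₗ
    LinearMap.mk₂ ℝ (fun F X => F * X + X * Fᵀ)
      (fun _ _ _ => by simp only [Matrix.add_mul, transpose_add, Matrix.mul_add]; abel)
      (fun _ _ _ => by simp only [Matrix.smul_mul, transpose_smul, Matrix.mul_smul, smul_add])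
      (fun _ _ _ => by simp only [Matrix.add_mul, Matrix.mul_add]; abel)
      (fun _ _ _ => by simp only [Matrix.smul_mul, Matrix.mul_smul, smul_add])

@[simp] lemma lyapunovCLM_apply (F X : Matrix n n ℝ) : lyapunovCLM F X = F * X + X * Fᵀ := rfl

end Matrix

section MatrixCalculus

variable {n : Type*} [Fintype n] {f g : ℝ → Matrix n n ℝ} {f' g' : Matrix n n ℝ} {x : ℝ}

theorem HasDerivAt.matrix_mul (hf : HasDerivAt f f' x) (hg : HasDerivAt g g' x) :
    HasDerivAt (fun t => f t * g t) (f' * g x + f x * g') x := by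
  simpa [add_comm] using mulCLM.hasDerivAt_of_bilinear (fun _ => hf) (fun _ => hg)

theorem HasDerivAt.matrix_transpose (hf : HasDerivAt f f' x) :
    HasDerivAt (fun t => (f t)ᵀ) f'ᵀ x :=
  (transposeCLM (n := n)).hasFDerivAt.comp_hasDerivAt x hf

theorem HasDerivAt.matrix_mul_mul_transpose {F : Matrix n n ℝ} (C : Matrix n n ℝ)
    (hf : HasDerivAt f (F * f x) x) :
    HasDerivAt (fun t => f t * C * (f t)ᵀ) (lyapunovCLM F (f x * C * (f x)ᵀ)) x := by
  convert (hf.matrix_mul (hasDerivAt_const x C)).matrix_mul hf.matrix_transpose using 1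
  simp [transpose_mul, Matrix.mul_assoc]

end MatrixCalculus

theorem riccati_sub_riccati {n : Type*} [Fintype n] {A S R P Q : Matrix n n ℝ}
    (hS : S.IsSymm) (hP : P.IsSymm) (hQ : Q.IsSymm) :
    (A * P + P * Aᵀ - P * S * P + R) - (A * Q + Q * Aᵀ - Q * S * Q + R)
      = lyapunovCLM (A - (1 / 2 : ℝ) • ((P + Q) * S)) (P - Q) := by
  rw [lyapunovCLM_apply, transpose_sub, transpose_smul, transpose_mul, transpose_add,
    hS.eq, hP.eq, hQ.eq]
  simp only [Matrix.mul_sub, Matrix.sub_mul, Matrix.add_mul, Matrix.mul_add,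
    Matrix.smul_mul, Matrix.mul_smul, smul_sub, smul_add, Matrix.mul_assoc]
  module

theorem riccati_flow_semigroup_formula_general (r : ℕ)
    (A S : ℝ → Matrix (Fin r) (Fin r) ℝ)
    (hAcont : Continuous A) (hScont : Continuous S)
    (hS : ∀ t : ℝ, (S t).PosSemidef)
    (R1 : Matrix (Fin r) (Fin r) ℝ)
    (φ1 φ2 : ℝ → Matrix (Fin r) (Fin r) ℝ)
    (hφ1sym : ∀ t : ℝ, (φ1 t).IsSymm) (hφ2sym : ∀ t : ℝ, (φ2 t).IsSymm)
    (hφ1 : ∀ t : ℝ, HasDerivAt φ1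
      (A t * φ1 t + φ1 t * (A t)ᵀ - φ1 t * S t * φ1 t + R1) t)
    (hφ2 : ∀ t : ℝ, HasDerivAt φ2
      (A t * φ2 t + φ2 t * (A t)ᵀ - φ2 t * S t * φ2 t + R1) t)
    (E : ℝ → ℝ → Matrix (Fin r) (Fin r) ℝ)
    (hE0 : ∀ s : ℝ, E s s = 1)
    (hE : ∀ s t : ℝ, HasDerivAt (fun u => E s u)
      ((A t - ((1 : ℝ)/2) • ((φ1 t + φ2 t) * S t)) * E s t) t) :
    ∀ s t : ℝ, 0 ≤ s → s ≤ t →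
      φ1 t - φ2 t = E s t * (φ1 s - φ2 s) * (E s t)ᵀ := by
  intro s t _ hst
  set F := fun u => A u - ((1 : ℝ)/2) • ((φ1 u + φ2 u) * S u)
  set H := fun u => φ1 u - φ2 u - E s u * (φ1 s - φ2 s) * (E s u)ᵀ
  have hH' : ∀ u, HasDerivAt H (lyapunovCLM (F u) (H u)) u := fun u => by
    have hSu : (S u).IsSymm := isHermitian_iff_isSymm.1 (hS u).isHermitian
    refine (((hφ1 u).sub (hφ2 u)).sub
      ((hE s u).matrix_mul_mul_transpose (φ1 s - φ2 s))).congr_deriv ?_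
    rw [riccati_sub_riccati hSu (hφ1sym u) (hφ2sym u), ← map_sub]
  have hφ1cont : Continuous φ1 := continuous_iff_continuousAt.2 fun u => (hφ1 u).continuousAt
  have hφ2cont : Continuous φ2 := continuous_iff_continuousAt.2 fun u => (hφ2 u).continuousAt
  have hFcont : Continuous F := by fun_prop
  have hHcont : Continuous H := continuous_iff_continuousAt.2 fun u => (hH' u).continuousAt
  have hHt := eqOn_zero_of_hasDerivWithinAt_clm_apply
    (lyapunovCLM.continuous.comp hFcont).continuousOn hHcont.continuousOn
    (fun u _ => (hH' u).hasDerivWithinAt) (by simp [H, hE0]) ⟨hst, le_rfl⟩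
  exact sub_eq_zero.1 hHt

/-- Semigroup formula for differences of Riccati flows:
`φ_t(Q1) − φ_t(Q2) = E_{s,t}(Q1,Q2) [φ_s(Q1) − φ_s(Q2)] E_{s,t}(Q1,Q2)ᵀ`, where
`E_{s,t}(Q1,Q2)` is the transition matrix of `u ↦ A_u − ((φ_u(Q1)+φ_u(Q2))/2) S_u`. -/
theorem riccati_flow_semigroup_formula (r : ℕ)
    (A S : ℝ → Matrix (Fin r) (Fin r) ℝ)
    (hAcont : Continuous A) (hScont : Continuous S)
    (hS : ∀ t : ℝ, (S t).PosSemidef)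
    (R1 : Matrix (Fin r) (Fin r) ℝ) (hR1 : R1.PosDef)
    (Q1 Q2 : Matrix (Fin r) (Fin r) ℝ) (hQ1 : Q1.PosDef) (hQ2 : Q2.PosDef)
    (φ1 φ2 : ℝ → Matrix (Fin r) (Fin r) ℝ)
    (hφ1sym : ∀ t : ℝ, (φ1 t).IsSymm) (hφ2sym : ∀ t : ℝ, (φ2 t).IsSymm)
    (hφ10 : φ1 0 = Q1) (hφ20 : φ2 0 = Q2)
    (hφ1 : ∀ t : ℝ, HasDerivAt φ1
      (A t * φ1 t + φ1 t * (A t)ᵀ - φ1 t * S t * φ1 t + R1) t)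
    (hφ2 : ∀ t : ℝ, HasDerivAt φ2
      (A t * φ2 t + φ2 t * (A t)ᵀ - φ2 t * S t * φ2 t + R1) t)
    (E : ℝ → ℝ → Matrix (Fin r) (Fin r) ℝ)
    (hE0 : ∀ s : ℝ, E s s = 1)
    (hE : ∀ s t : ℝ, HasDerivAt (fun u => E s u)
      ((A t - ((1 : ℝ)/2) • ((φ1 t + φ2 t) * S t)) * E s t) t) :
    ∀ s t : ℝ, 0 ≤ s → s ≤ t →
      φ1 t - φ2 t = E s t * (φ1 s - φ2 s) * (E s t)ᵀ :=
  riccati_flow_semigroup_formula_general r A S hAcont hScont hS R1 φ1 φ2 hφ1sym hφ2sym hφ1 hφ2 E hE0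
    hE
end

section
/- The Riccati flow is monotone with respect to the Loewner order: if Q1 ≤ Q2 (i.e. Q2 − Q1 is positive semi-definite) then φ_t(Q1) ≤ φ_t(Q2) for all t ≥ 0. -/
open Matrix

attribute [local instance] Matrix.normedAddCommGroup Matrix.normedSpace

/-!
The difference `Δ = φ₂ - φ₁` of two Riccati flows solves the differential Lyapunov equation
`Δ' = M Δ + Δ Mᵀ` with `M = A - ½ (φ₁ + φ₂) S`, so it suffices to show that this linear equation
preserves positive semidefiniteness. For `δ > 0` and `c` large, `Δ + δ e^{c (s - t)} I` solves
the same equation with an extra positive definite forcing term; at a first time where it ceased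
to be positive definite, a unit kernel vector `x` would make `s ↦ xᵀ (Δ + δ e^{c (s - t)} I) x`
vanish there with positive derivative after being nonnegative just before, which is absurd.
Letting `δ → 0` gives the claim.
-/

open Set Filter Topology

theorem HasDerivAt.pos_of_pos_of_forall_Ioo_nonneg {f : ℝ → ℝ} {f' a t : ℝ}
    (hf : HasDerivAt f f' t) (hf' : 0 < f') (hat : a < t) (hleft : ∀ s ∈ Ioo a t, 0 ≤ f s) :
    0 < f t := by
  have hslope : ∀ᶠ s in 𝓝[<] t, 0 < slope f t s :=
    ((hasDerivAt_iff_tendsto_slope.mp hf).mono_left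
      (nhdsWithin_mono t fun _ hs => ne_of_lt hs)).eventually_const_lt hf'
  obtain ⟨s, hpos, hs⟩ := (hslope.and (Ioo_mem_nhdsLT hat)).exists
  rw [slope_def_field, div_pos_iff] at hpos
  have hfs := hleft s hs
  have hst := hs.2
  rcases hpos with h | h <;> linarith [h.1, h.2]

theorem riccati_sub_riccati_eq {n : Type*} [Fintype n] (A S R X Y : Matrix n n ℝ)
    (hS : Sᵀ = S) (hX : Xᵀ = X) (hY : Yᵀ = Y) :
    (A * Y + Y * Aᵀ - Y * S * Y + R) - (A * X + X * Aᵀ - X * S * X + R) =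
      (A - (2⁻¹ : ℝ) • ((X + Y) * S)) * (Y - X) +
        (Y - X) * (A - (2⁻¹ : ℝ) • ((X + Y) * S))ᵀ := by
  have hcross : (X + Y) * S * (Y - X) + (Y - X) * (S * (X + Y)) =
      (2 : ℝ) • (Y * S * Y - X * S * X) := by
    rw [two_smul]; noncomm_ring
  rw [transpose_sub, transpose_smul, transpose_mul, transpose_add, hS, hX, hY]
  calc _ = A * (Y - X) + (Y - X) * Aᵀ - (2⁻¹ : ℝ) • ((2 : ℝ) • (Y * S * Y - X * S * X)) := by
        rw [smul_smul, inv_mul_cancel₀ two_ne_zero, one_smul]; noncomm_ring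
    _ = _ := by
        rw [← hcross]
        simp only [mul_sub, sub_mul, smul_add, smul_sub, smul_mul_assoc, mul_smul_comm]
        abel

namespace Matrix

variable {n : Type*} [Fintype n]

theorem dotProduct_mulVec_eq_norm_sq_mul (G : Matrix n n ℝ) {x : n → ℝ} (hx : x ≠ 0) :
    x ⬝ᵥ (G *ᵥ x) = ‖x‖ ^ 2 * ((‖x‖⁻¹ • x) ⬝ᵥ (G *ᵥ (‖x‖⁻¹ • x))) := by
  have hx' : ‖x‖ ≠ 0 := norm_ne_zero_iff.mpr hx
  simp only [mulVec_smul, smul_dotProduct, dotProduct_smul, smul_eq_mul]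
  field_simp

theorem PosSemidef.of_forall_mem_sphere {G : Matrix n n ℝ} (hG : G.IsHermitian)
    (h : ∀ x ∈ Metric.sphere (0 : n → ℝ) 1, 0 ≤ x ⬝ᵥ (G *ᵥ x)) : G.PosSemidef := by
  refine .of_dotProduct_mulVec_nonneg hG fun x => ?_
  rcases eq_or_ne x 0 with rfl | hx
  · simp
  · rw [star_trivial, dotProduct_mulVec_eq_norm_sq_mul G hx]
    exact mul_nonneg (sq_nonneg _)
      (h _ (mem_sphere_zero_iff_norm.mpr (norm_smul_inv_norm (𝕜 := ℝ) hx)))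

theorem PosDef.of_forall_mem_sphere {G : Matrix n n ℝ} (hG : G.IsHermitian)
    (h : ∀ x ∈ Metric.sphere (0 : n → ℝ) 1, 0 < x ⬝ᵥ (G *ᵥ x)) : G.PosDef := by
  refine .of_dotProduct_mulVec_pos hG fun x hx => ?_
  rw [star_trivial, dotProduct_mulVec_eq_norm_sq_mul G hx]
  exact mul_pos (by positivity)
    (h _ (mem_sphere_zero_iff_norm.mpr (norm_smul_inv_norm (𝕜 := ℝ) hx)))

theorem PosSemidef.of_forall_pos_add_smul_one [DecidableEq n] {A : Matrix n n ℝ}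
    (hA : A.IsHermitian) (h : ∀ δ : ℝ, 0 < δ → (A + δ • 1).PosDef) : A.PosSemidef := by
  refine .of_dotProduct_mulVec_nonneg hA fun x => ?_
  have hlim : Tendsto (fun δ : ℝ => star x ⬝ᵥ ((A + δ • 1) *ᵥ x)) (𝓝[>] 0)
      (𝓝 (star x ⬝ᵥ (A *ᵥ x))) := by
    simp only [add_mulVec, smul_mulVec, one_mulVec, dotProduct_add, dotProduct_smul, smul_eq_mul]
    simpa using (tendsto_const_nhds.add ((tendsto_id (x := 𝓝 (0 : ℝ))).mul_const _)).mono_left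
      nhdsWithin_le_nhds
  exact ge_of_tendsto hlim <| eventually_nhdsWithin_of_forall fun δ hδ =>
    (h δ hδ).posSemidef.dotProduct_mulVec_nonneg x

theorem dotProduct_mulVec_le_card_sq_mul_norm (N : Matrix n n ℝ) (x : n → ℝ) :
    x ⬝ᵥ (N *ᵥ x) ≤ Fintype.card n ^ 2 * ‖N‖ * (x ⬝ᵥ x) := by
  have hsq : ∀ i, x i * x i ≤ x ⬝ᵥ x := fun i =>
    Finset.single_le_sum (f := fun j => x j * x j) (fun j _ => mul_self_nonneg _)
      (Finset.mem_univ i)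
  have hterm : ∀ i j, x i * (N i j * x j) ≤ ‖N‖ * (x ⬝ᵥ x) := fun i j => by
    have hNij : |N i j| ≤ ‖N‖ := by
      simpa only [Real.norm_eq_abs] using norm_entry_le_entrywise_sup_norm N
    have hxx : |x i * x j| ≤ x ⬝ᵥ x := abs_le.mpr
      ⟨by nlinarith [sq_nonneg (x i + x j), hsq i, hsq j],
        by nlinarith [sq_nonneg (x i - x j), hsq i, hsq j]⟩
    calc x i * (N i j * x j) ≤ |N i j| * |x i * x j| := by
          rw [← abs_mul]; exact (le_abs_self _).trans_eq (by ring_nf)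
      _ ≤ ‖N‖ * (x ⬝ᵥ x) := mul_le_mul hNij hxx (abs_nonneg _) ((abs_nonneg _).trans hNij)
  calc x ⬝ᵥ (N *ᵥ x) = ∑ i, ∑ j, x i * (N i j * x j) := by
        simp only [dotProduct, mulVec, Finset.mul_sum]
    _ ≤ ∑ _i : n, ∑ _j : n, ‖N‖ * (x ⬝ᵥ x) := Finset.sum_le_sum fun i _ =>
        Finset.sum_le_sum fun j _ => hterm i j
    _ = Fintype.card n ^ 2 * ‖N‖ * (x ⬝ᵥ x) := by
        simp only [Finset.sum_const, Finset.card_univ, nsmul_eq_mul]; ring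

theorem exists_posDef_smul_one_sub [DecidableEq n] {N : ℝ → Matrix n n ℝ} (hN : Continuous N)
    (hNherm : ∀ t, (N t).IsHermitian) {K : Set ℝ} (hK : IsCompact K) :
    ∃ c : ℝ, ∀ t ∈ K, (c • 1 - N t).PosDef := by
  obtain ⟨C, hC⟩ := hK.exists_bound_of_continuousOn hN.continuousOn
  refine ⟨Fintype.card n ^ 2 * C + 1, fun t ht => .of_dotProduct_mulVec_pos ?_ fun x hx => ?_⟩
  · exact (isHermitian_one.smul (IsSelfAdjoint.all _)).sub (hNherm t)
  · have hxx : 0 < x ⬝ᵥ x := dotProduct_self_star_pos_iff.mpr hx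
    have hNt := dotProduct_mulVec_le_card_sq_mul_norm (N t) x
    have : Fintype.card n ^ 2 * ‖N t‖ ≤ Fintype.card n ^ 2 * C := by gcongr; exact hC t ht
    simp only [star_trivial, sub_mulVec, smul_mulVec, one_mulVec, dotProduct_sub,
      dotProduct_smul, smul_eq_mul]
    nlinarith

theorem hasDerivAt_dotProduct_mulVec {g : ℝ → Matrix n n ℝ} {g' : Matrix n n ℝ} {t : ℝ}
    (hg : HasDerivAt g g' t) (x : n → ℝ) :
    HasDerivAt (fun s => x ⬝ᵥ (g s *ᵥ x)) (x ⬝ᵥ (g' *ᵥ x)) t :=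
  let L : Matrix n n ℝ →ₗ[ℝ] ℝ :=
    { toFun := fun G => x ⬝ᵥ (G *ᵥ x)
      map_add' := fun G H => by simp only [add_mulVec, dotProduct_add]
      map_smul' := fun k G => by simp only [smul_mulVec, dotProduct_smul, RingHom.id_apply] }
  (LinearMap.toContinuousLinearMap L).hasFDerivAt.comp_hasDerivAt t hg

theorem hasDerivAt_dotProduct_mulVec_of_mulVec_eq_zero {g M P : ℝ → Matrix n n ℝ} {t : ℝ}
    {x : n → ℝ} (hgt : (g t).IsHermitian)
    (hderiv : HasDerivAt g (M t * g t + g t * (M t)ᵀ + P t) t) (hker : g t *ᵥ x = 0) :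
    HasDerivAt (fun s => x ⬝ᵥ (g s *ᵥ x)) (x ⬝ᵥ (P t *ᵥ x)) t := by
  have hker' : x ᵥ* g t = 0 := by
    rw [← mulVec_transpose, ← conjTranspose_eq_transpose_of_trivial, hgt.eq, hker]
  refine (hasDerivAt_dotProduct_mulVec hderiv x).congr_deriv ?_
  simp only [add_mulVec, ← mulVec_mulVec, hker, mulVec_zero, dotProduct_add,
    dotProduct_mulVec x (g t), hker', zero_dotProduct, zero_add]

theorem posDef_of_hasDerivAt_lyapunov_add_posDef {g M P : ℝ → Matrix n n ℝ} {T : ℝ}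
    (hg : ∀ t, (g t).IsHermitian)
    (hderiv : ∀ t, HasDerivAt g (M t * g t + g t * (M t)ᵀ + P t) t)
    (hP : ∀ t ∈ Icc 0 T, (P t).PosDef) (h0 : (g 0).PosDef) :
    ∀ t ∈ Icc 0 T, (g t).PosDef := by
  set q : ℝ × (n → ℝ) → ℝ := fun p => p.2 ⬝ᵥ (g p.1 *ᵥ p.2)
  have hgc : Continuous g := continuous_iff_continuousAt.2 fun t => (hderiv t).continuousAt
  have hq : Continuous q :=
    continuous_snd.dotProduct ((hgc.comp continuous_fst).matrix_mulVec continuous_snd)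
  by_contra! hbad
  set Z := (Icc 0 T ×ˢ Metric.sphere (0 : n → ℝ) 1) ∩ {p | q p ≤ 0}
  have hZ : IsCompact Z :=
    (isCompact_Icc.prod (isCompact_sphere 0 1)).inter_right (isClosed_le hq continuous_const)
  have hZne : Z.Nonempty := by
    obtain ⟨t, ht, hnot⟩ := hbad
    by_contra hZ
    exact hnot (.of_forall_mem_sphere (hg t) fun x hx =>
      not_le.mp fun h => hZ ⟨(t, x), ⟨ht, hx⟩, h⟩)
  -- `t₀` is the first time at which `g` fails to be positive on the unit sphere, at `x₀`.
  obtain ⟨⟨t₀, x₀⟩, ⟨⟨ht₀, hx₀⟩, hqx₀⟩, hmin⟩ :=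
    hZ.exists_isMinOn hZne continuous_fst.continuousOn
  replace hqx₀ : q (t₀, x₀) ≤ 0 := hqx₀
  have hbefore : ∀ s ∈ Ico 0 t₀, ∀ y ∈ Metric.sphere (0 : n → ℝ) 1, 0 < q (s, y) := by
    intro s hs y hy
    by_contra! h
    exact (hmin ⟨⟨⟨hs.1, hs.2.le.trans ht₀.2⟩, hy⟩, h⟩).not_gt hs.2
  have hx₀ne : x₀ ≠ 0 := ne_zero_of_mem_unit_sphere ⟨x₀, hx₀⟩
  have ht₀pos : 0 < t₀ := by
    refine ht₀.1.lt_of_ne fun h => hqx₀.not_gt ?_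
    subst h
    simpa [q] using h0.dotProduct_mulVec_pos hx₀ne
  have hpsd : (g t₀).PosSemidef := by
    refine .of_forall_mem_sphere (hg t₀) fun y hy =>
      ge_of_tendsto (f := fun s => q (s, y)) (x := 𝓝[<] t₀) ?_ ?_
    · exact ((hq.comp (continuous_id.prodMk continuous_const)).tendsto t₀).mono_left
        nhdsWithin_le_nhds
    · filter_upwards [Ioo_mem_nhdsLT ht₀pos] with s hs
      exact (hbefore s ⟨hs.1.le, hs.2⟩ y hy).le
  have hker : g t₀ *ᵥ x₀ = 0 := (hpsd.dotProduct_mulVec_zero_iff x₀).mp <| by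
    simpa [q] using le_antisymm hqx₀ (hpsd.dotProduct_mulVec_nonneg x₀)
  have hderiv_q : HasDerivAt (fun s => q (s, x₀)) (x₀ ⬝ᵥ (P t₀ *ᵥ x₀)) t₀ :=
    hasDerivAt_dotProduct_mulVec_of_mulVec_eq_zero (hg t₀) (hderiv t₀) hker
  exact hqx₀.not_gt <| hderiv_q.pos_of_pos_of_forall_Ioo_nonneg
    (by simpa using (hP t₀ ht₀).dotProduct_mulVec_pos hx₀ne) ht₀pos
    fun s hs => (hbefore s ⟨hs.1.le, hs.2⟩ x₀ hx₀).le

theorem posSemidef_of_hasDerivAt_lyapunov {Δ M : ℝ → Matrix n n ℝ}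
    (hM : Continuous M) (hΔ : ∀ t, (Δ t).IsHermitian)
    (hderiv : ∀ t, HasDerivAt Δ (M t * Δ t + Δ t * (M t)ᵀ) t) (h0 : (Δ 0).PosSemidef)
    {t : ℝ} (ht : 0 ≤ t) : (Δ t).PosSemidef := by
  classical
  obtain ⟨c, hc⟩ := exists_posDef_smul_one_sub (hM.add hM.matrix_transpose)
    (fun s => isHermitian_iff_isSymm.mpr (isSymm_add_transpose_self (M s)))
    (isCompact_Icc (a := 0) (b := t))
  refine .of_forall_pos_add_smul_one (hΔ t) fun δ hδ => ?_
  set a : ℝ → ℝ := fun s => δ * Real.exp (c * (s - t))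
  have ha : ∀ s, HasDerivAt a (a s * c) s := fun s => by
    refine ((((hasDerivAt_id s).sub_const t).const_mul c).exp.const_mul δ).congr_deriv ?_
    simp only [a, id, mul_one]; ring
  have hapos : ∀ s, 0 < a s := fun s => by positivity
  have hpert := posDef_of_hasDerivAt_lyapunov_add_posDef
    (g := fun s => Δ s + a s • 1) (M := M) (P := fun s => a s • (c • 1 - (M s + (M s)ᵀ)))
    (fun s => (hΔ s).add (isHermitian_one.smul (IsSelfAdjoint.all _)))
    (fun s => ((hderiv s).add ((ha s).smul_const 1)).congr_deriv (by
      simp only [mul_add, add_mul, smul_sub, smul_add, smul_smul, mul_smul_comm, smul_mul_assoc,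
        mul_one, one_mul]
      abel))
    (fun s hs => (hc s hs).smul (hapos s))
    (PosDef.posSemidef_add h0 (PosDef.one.smul (hapos 0)))
    t ⟨ht, le_rfl⟩
  simpa [a] using hpert

end Matrix

theorem riccati_flow_monotone_general (r : ℕ)
    (A S : ℝ → Matrix (Fin r) (Fin r) ℝ)
    (hAcont : Continuous A) (hScont : Continuous S)
    (hS : ∀ t : ℝ, (S t).PosSemidef)
    (R1 : Matrix (Fin r) (Fin r) ℝ)
    (Q1 Q2 : Matrix (Fin r) (Fin r) ℝ)
    (hle : (Q2 - Q1).PosSemidef)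
    (φ1 φ2 : ℝ → Matrix (Fin r) (Fin r) ℝ)
    (hφ1sym : ∀ t : ℝ, (φ1 t).IsSymm) (hφ2sym : ∀ t : ℝ, (φ2 t).IsSymm)
    (hφ10 : φ1 0 = Q1) (hφ20 : φ2 0 = Q2)
    (hφ1 : ∀ t : ℝ, HasDerivAt φ1
      (A t * φ1 t + φ1 t * (A t)ᵀ - φ1 t * S t * φ1 t + R1) t)
    (hφ2 : ∀ t : ℝ, HasDerivAt φ2
      (A t * φ2 t + φ2 t * (A t)ᵀ - φ2 t * S t * φ2 t + R1) t) :
    ∀ t : ℝ, 0 ≤ t → (φ2 t - φ1 t).PosSemidef := by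
  have hφ1c : Continuous φ1 := continuous_iff_continuousAt.2 fun t => (hφ1 t).continuousAt
  have hφ2c : Continuous φ2 := continuous_iff_continuousAt.2 fun t => (hφ2 t).continuousAt
  intro t ht
  refine posSemidef_of_hasDerivAt_lyapunov
    (M := fun s => A s - (2⁻¹ : ℝ) • ((φ1 s + φ2 s) * S s))
    (by fun_prop)
    (fun s => isHermitian_iff_isSymm.mpr ((hφ2sym s).sub (hφ1sym s)))
    (fun s => ((hφ2 s).sub (hφ1 s)).congr_deriv (riccati_sub_riccati_eq _ _ _ _ _
      (isHermitian_iff_isSymm.mp (hS s).isHermitian) (hφ1sym s) (hφ2sym s)))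
    (by simpa [hφ10, hφ20] using hle) ht

/-- Monotonicity of the Riccati flow with respect to the Loewner order:
if `Q2 − Q1` is positive semi-definite then `φ_t(Q2) − φ_t(Q1)` is positive
semi-definite for all `t ≥ 0`. -/
theorem riccati_flow_monotone (r : ℕ)
    (A S : ℝ → Matrix (Fin r) (Fin r) ℝ)
    (hAcont : Continuous A) (hScont : Continuous S)
    (hS : ∀ t : ℝ, (S t).PosSemidef)
    (R1 : Matrix (Fin r) (Fin r) ℝ) (hR1 : R1.PosDef)
    (Q1 Q2 : Matrix (Fin r) (Fin r) ℝ) (hQ1 : Q1.PosDef) (hQ2 : Q2.PosDef)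
    (hle : (Q2 - Q1).PosSemidef)
    (φ1 φ2 : ℝ → Matrix (Fin r) (Fin r) ℝ)
    (hφ1sym : ∀ t : ℝ, (φ1 t).IsSymm) (hφ2sym : ∀ t : ℝ, (φ2 t).IsSymm)
    (hφ10 : φ1 0 = Q1) (hφ20 : φ2 0 = Q2)
    (hφ1 : ∀ t : ℝ, HasDerivAt φ1
      (A t * φ1 t + φ1 t * (A t)ᵀ - φ1 t * S t * φ1 t + R1) t)
    (hφ2 : ∀ t : ℝ, HasDerivAt φ2
      (A t * φ2 t + φ2 t * (A t)ᵀ - φ2 t * S t * φ2 t + R1) t) :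
    ∀ t : ℝ, 0 ≤ t → (φ2 t - φ1 t).PosSemidef :=
  riccati_flow_monotone_general r A S hAcont hScont hS R1 Q1 Q2 hle φ1 φ2 hφ1sym hφ2sym hφ10 hφ20
    hφ1 hφ2
end

section
/- The Riccati flow depends monotonically on the noise parameters: if R1(2) ≥ R1(1) > 0 and S_t(1) ≥ S_t(2) ≥ 0 for all t ≥ 0, and φ_t(Q,i) solves ∂_t P = A_t P + P A_t' − P S_t(i) P + R1(i) with common initial condition Q > 0, then φ_t(Q,2) ≥ φ_t(Q,1) for all t ≥ 0. -/
/-!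
The difference `Δ = φ₂ - φ₁` solves a Sylvester-type equation `Δ' = B Δ + Δ C + N` whose forcing
`N = φ₁ (S₁ - S₂) φ₁ + (R₁(2) - R₁(1))` is positive semidefinite, and such equations keep `Δ`
in the positive semidefinite cone forward in time. To see this, fix `T` and perturb `Δ` to
`Δ + ε e^{ct} I`, with `c` larger than `r` times a bound for `‖B + C‖` on `[0, T]`. At the first
time `τ` at which the perturbed matrix stops being positive definite it has a kernel vector `x`,
so the quadratic form along `x` is non-increasing at `τ`; but the equation makes its derivative
at least `ε e^{cτ} (c - r ‖B τ + C τ‖) |x|² > 0`. Letting `ε → 0` gives `Δ T ≥ 0`.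
-/

open Matrix Set Filter Topology

attribute [local instance] Matrix.normedAddCommGroup Matrix.normedSpace

namespace Matrix

variable {n : Type*} [Fintype n]

-- `‖M‖` is the entrywise sup norm of the local instance above.
lemma dotProduct_mulVec_le_card_mul_norm (M : Matrix n n ℝ) (x : n → ℝ) :
    x ⬝ᵥ M *ᵥ x ≤ Fintype.card n * ‖M‖ * (x ⬝ᵥ x) := by
  calc x ⬝ᵥ M *ᵥ x = ∑ i, ∑ j, x i * M i j * x j := by
        simp only [dotProduct, mulVec, Finset.mul_sum, mul_assoc]
    _ ≤ ∑ i, ∑ j, ‖M‖ * (|x i| * |x j|) := by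
        refine Finset.sum_le_sum fun i _ => Finset.sum_le_sum fun j _ => ?_
        calc x i * M i j * x j ≤ |x i * M i j * x j| := le_abs_self _
          _ = |M i j| * (|x i| * |x j|) := by rw [abs_mul, abs_mul]; ring
          _ ≤ ‖M‖ * (|x i| * |x j|) := by
              gcongr; exact norm_entry_le_entrywise_sup_norm M
    _ = ‖M‖ * (∑ i, |x i|) ^ 2 := by
        rw [sq, Finset.sum_mul_sum, Finset.mul_sum]
        simp only [Finset.mul_sum]
    _ ≤ ‖M‖ * (Fintype.card n * ∑ i, |x i| ^ 2) := by
        gcongr; exact sq_sum_le_card_mul_sum_sq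
    _ = Fintype.card n * ‖M‖ * (x ⬝ᵥ x) := by
        simp only [dotProduct, sq, abs_mul_abs_self]; ring

lemma posDef_iff_forall_mem_sphere {M : Matrix n n ℝ} (hM : M.IsHermitian) :
    M.PosDef ↔ ∀ x ∈ Metric.sphere (0 : n → ℝ) 1, 0 < x ⬝ᵥ M *ᵥ x := by
  refine ⟨fun h x hx => ?_, fun h => .of_dotProduct_mulVec_pos hM fun y hy => ?_⟩
  · simpa using h.dotProduct_mulVec_pos (ne_zero_of_mem_sphere one_ne_zero ⟨x, hx⟩)
  · have hy_pos : 0 < ‖y‖ := norm_pos_iff.2 hy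
    have hunit := h (‖y‖⁻¹ • y) (by simp [norm_smul, hy_pos.ne'])
    rw [mulVec_smul, dotProduct_smul, smul_dotProduct, smul_eq_mul, smul_eq_mul,
      ← mul_assoc] at hunit
    simpa using pos_of_mul_pos_right hunit (by positivity)

lemma isOpen_setOf_forall_mem_sphere_pos :
    IsOpen {M : Matrix n n ℝ | ∀ x ∈ Metric.sphere (0 : n → ℝ) 1, 0 < x ⬝ᵥ M *ᵥ x} := by
  refine isOpen_iff_eventually.2 fun M hM =>
    (isCompact_sphere 0 1).eventually_forall_of_forall_eventually fun x hx => ?_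
  have hq : Continuous fun p : Matrix n n ℝ × (n → ℝ) => p.2 ⬝ᵥ p.1 *ᵥ p.2 :=
    continuous_snd.dotProduct (continuous_fst.matrix_mulVec continuous_snd)
  exact (hq.tendsto (M, x)).eventually (lt_mem_nhds (hM x hx))

lemma isOpen_setOf_posDef {X : Type*} [TopologicalSpace X] {g : X → Matrix n n ℝ}
    (hg : Continuous g) (hherm : ∀ t, (g t).IsHermitian) : IsOpen {t | (g t).PosDef} := by
  have hset : {t | (g t).PosDef} =
      g ⁻¹' {M | ∀ x ∈ Metric.sphere (0 : n → ℝ) 1, 0 < x ⬝ᵥ M *ᵥ x} := by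
    ext t; exact posDef_iff_forall_mem_sphere (hherm t)
  exact hset ▸ isOpen_setOf_forall_mem_sphere_pos.preimage hg

lemma PosSemidef.exists_mulVec_eq_zero_of_not_posDef {M : Matrix n n ℝ} (hM : M.PosSemidef)
    (h : ¬M.PosDef) : ∃ x ≠ 0, M *ᵥ x = 0 := by
  classical
  exact exists_mulVec_eq_zero_iff.2 (not_not.1 (hM.posDef_iff_det_ne_zero.not.1 h))

lemma posSemidef_of_forall_posDef_add_smul_one [DecidableEq n] {M : Matrix n n ℝ}
    (h : ∀ ε : ℝ, 0 < ε → (M + ε • 1).PosDef) : M.PosSemidef := by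
  have hM : M.IsHermitian := by
    simpa using (h 1 one_pos).isHermitian.sub isHermitian_one
  refine .of_dotProduct_mulVec_nonneg hM fun x => ?_
  refine le_of_forall_pos_le_add fun δ hδ => ?_
  have hx : 0 ≤ x ⬝ᵥ x := Finset.sum_nonneg fun i _ => mul_self_nonneg (x i)
  have hpos := (h (δ / (x ⬝ᵥ x + 1)) (by positivity)).posSemidef.dotProduct_mulVec_nonneg x
  simp only [star_trivial, add_mulVec, smul_mulVec, one_mulVec, dotProduct_add,
    dotProduct_smul, smul_eq_mul] at hpos
  have hsmall : δ / (x ⬝ᵥ x + 1) * (x ⬝ᵥ x) ≤ δ := by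
    rw [div_mul_eq_mul_div, div_le_iff₀ (by positivity)]; nlinarith
  simp only [star_trivial]; linarith

lemma dotProduct_mul_add_mul_mulVec_of_mulVec_eq_smul {B C D : Matrix n n ℝ} (hD : D.IsSymm)
    {x : n → ℝ} {μ : ℝ} (hx : D *ᵥ x = μ • x) :
    x ⬝ᵥ (B * D + D * C) *ᵥ x = μ * (x ⬝ᵥ (B + C) *ᵥ x) := by
  have hxD : x ᵥ* D = μ • x := by rw [← mulVec_transpose, hD.eq, hx]
  rw [add_mulVec, ← mulVec_mulVec, ← mulVec_mulVec, hx, dotProduct_add, dotProduct_mulVec x D,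
    hxD, mulVec_smul, add_mulVec, dotProduct_add]
  simp only [dotProduct_smul, smul_dotProduct, smul_eq_mul]; ring

lemma _root_.HasDerivAt.dotProduct_mulVec_self {g : ℝ → Matrix n n ℝ} {g' : Matrix n n ℝ}
    {t : ℝ} (hg : HasDerivAt g g' t) (x : n → ℝ) :
    HasDerivAt (fun s => x ⬝ᵥ g s *ᵥ x) (x ⬝ᵥ g' *ᵥ x) t := by
  let q : Matrix n n ℝ →ₗ[ℝ] ℝ :=
    { toFun := fun M => x ⬝ᵥ M *ᵥ x
      map_add' := fun M N => by simp only [add_mulVec, dotProduct_add]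
      map_smul' := fun c M => by simp only [smul_mulVec, dotProduct_smul, RingHom.id_apply] }
  exact (LinearMap.toContinuousLinearMap q).hasFDerivAt.comp_hasDerivAt t hg

lemma exists_first_not_posDef {g : ℝ → Matrix n n ℝ} (hg : Continuous g)
    (hherm : ∀ t, (g t).IsHermitian) (h0 : (g 0).PosDef) {t₁ : ℝ} (ht₁ : 0 ≤ t₁)
    (h₁ : ¬(g t₁).PosDef) :
    ∃ τ ∈ Ioc 0 t₁, (∀ t ∈ Ico 0 τ, (g t).PosDef) ∧ (g τ).PosSemidef ∧ ¬(g τ).PosDef := by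
  set bad := Icc 0 t₁ ∩ {t | (g t).PosDef}ᶜ
  have hclosed : IsClosed bad :=
    isClosed_Icc.inter (isOpen_setOf_posDef hg hherm).isClosed_compl
  have hbdd : BddBelow bad := ⟨0, fun t ht => ht.1.1⟩
  have hτ : sInf bad ∈ bad := hclosed.csInf_mem ⟨t₁, ⟨ht₁, le_rfl⟩, h₁⟩ hbdd
  have hpos : 0 < sInf bad := hτ.1.1.lt_of_ne fun h => hτ.2 (h ▸ h0)
  have hbefore : ∀ t ∈ Ico 0 (sInf bad), (g t).PosDef := fun t ht => by
    by_contra h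
    exact ht.2.not_ge (csInf_le hbdd ⟨⟨ht.1, ht.2.le.trans hτ.1.2⟩, h⟩)
  refine ⟨sInf bad, ⟨hpos, hτ.1.2⟩, hbefore, ?_, hτ.2⟩
  refine .of_dotProduct_mulVec_nonneg (hherm _) fun x => ?_
  have hq : Continuous fun t => star x ⬝ᵥ g t *ᵥ x :=
    continuous_const.dotProduct (hg.matrix_mulVec continuous_const)
  refine ge_of_tendsto (hq.continuousAt.mono_left nhdsWithin_le_nhds :
    Tendsto _ (𝓝[<] sInf bad) _) ?_
  filter_upwards [Ioo_mem_nhdsLT hpos] with t ht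
  exact (hbefore t ⟨ht.1.le, ht.2⟩).posSemidef.dotProduct_mulVec_nonneg x

end Matrix

lemma IsLocalMinOn.hasDerivAt_nonpos {f : ℝ → ℝ} {f' b : ℝ} (h : IsLocalMinOn f (Iic b) b)
    (hf : HasDerivAt f f' b) : f' ≤ 0 := by
  have hy : (-1 : ℝ) ∈ posTangentConeAt (Iic b) b :=
    mem_posTangentConeAt_of_segment_subset fun y hy => by
      rw [segment_symm, segment_eq_Icc (by linarith)] at hy
      exact hy.2
  simpa using h.hasFDerivWithinAt_nonneg hf.hasDerivWithinAt.hasFDerivWithinAt hy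

section Sylvester

variable {n : Type*} [Fintype n] [DecidableEq n] {Δ B C N : ℝ → Matrix n n ℝ}

lemma posDef_add_exp_smul_one_of_hasDerivAt_sylvester (hΔsymm : ∀ t, (Δ t).IsSymm)
    (hN : ∀ t, 0 ≤ t → (N t).PosSemidef)
    (hΔ : ∀ t, HasDerivAt Δ (B t * Δ t + Δ t * C t + N t) t) (h0 : (Δ 0).PosSemidef)
    {T K c ε : ℝ} (hK : ∀ t ∈ Icc 0 T, ‖B t + C t‖ ≤ K) (hc : Fintype.card n * K < c)
    (hε : 0 < ε) : ∀ t ∈ Icc 0 T, (Δ t + (ε * Real.exp (c * t)) • 1).PosDef := by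
  set g := fun t => Δ t + (ε * Real.exp (c * t)) • (1 : Matrix n n ℝ)
  have hg' : ∀ t, HasDerivAt g
      (B t * Δ t + Δ t * C t + N t + (ε * Real.exp (c * t) * c) • 1) t := fun t => by
    have hexp : HasDerivAt (fun t => ε * Real.exp (c * t)) (ε * Real.exp (c * t) * c) t := by
      simpa [mul_assoc] using ((hasDerivAt_id t).const_mul c).exp.const_mul ε
    exact (hΔ t).add (hexp.smul_const 1)
  have hherm : ∀ t, (g t).IsHermitian := fun t =>
    isHermitian_iff_isSymm.2 ((hΔsymm t).add (isSymm_one.smul _))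
  have hg0 : (g 0).PosDef := by
    simpa [g] using PosDef.posSemidef_add h0 (PosDef.one.smul hε)
  intro t₁ ht₁
  by_contra h₁
  obtain ⟨τ, hτ, hbefore, hpsd, hnpd⟩ := exists_first_not_posDef
    (continuous_iff_continuousAt.2 fun t => (hg' t).continuousAt) hherm hg0 ht₁.1 h₁
  obtain ⟨x, hx0, hx⟩ := hpsd.exists_mulVec_eq_zero_of_not_posDef hnpd
  set η := ε * Real.exp (c * τ)
  have hη : 0 < η := by positivity
  have hΔx : Δ τ *ᵥ x = (-η) • x := by
    rw [neg_smul, ← add_eq_zero_iff_eq_neg]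
    simpa [g, add_mulVec, smul_mulVec] using hx
  have hmin : IsLocalMinOn (fun s => x ⬝ᵥ g s *ᵥ x) (Iic τ) τ := by
    filter_upwards [Ioc_mem_nhdsLE hτ.1] with t ht
    rw [hx, dotProduct_zero]
    rcases ht.2.lt_or_eq with h | rfl
    · simpa using (hbefore t ⟨ht.1.le, h⟩).posSemidef.dotProduct_mulVec_nonneg x
    · simp [hx]
  have hderiv := hmin.hasDerivAt_nonpos ((hg' τ).dotProduct_mulVec_self x)
  rw [add_mulVec, add_mulVec, dotProduct_add, dotProduct_add,
    dotProduct_mul_add_mul_mulVec_of_mulVec_eq_smul (hΔsymm τ) hΔx, smul_mulVec, one_mulVec,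
    dotProduct_smul, smul_eq_mul] at hderiv
  have hxx : 0 < x ⬝ᵥ x := by simpa using dotProduct_star_self_pos_iff.2 hx0
  have hBC : x ⬝ᵥ (B τ + C τ) *ᵥ x ≤ Fintype.card n * K * (x ⬝ᵥ x) :=
    (dotProduct_mulVec_le_card_mul_norm _ x).trans <| by
      gcongr; exact hK τ ⟨hτ.1.le, hτ.2.trans ht₁.2⟩
  have hNx : 0 ≤ x ⬝ᵥ N τ *ᵥ x := by
    simpa using (hN τ hτ.1.le).dotProduct_mulVec_nonneg x
  nlinarith [mul_pos hη (mul_pos (sub_pos.2 hc) hxx), mul_le_mul_of_nonneg_left hBC hη.le]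

theorem posSemidef_of_hasDerivAt_sylvester (hB : Continuous B) (hC : Continuous C)
    (hΔsymm : ∀ t, (Δ t).IsSymm) (hN : ∀ t, 0 ≤ t → (N t).PosSemidef)
    (hΔ : ∀ t, HasDerivAt Δ (B t * Δ t + Δ t * C t + N t) t) (h0 : (Δ 0).PosSemidef) :
    ∀ t, 0 ≤ t → (Δ t).PosSemidef := by
  intro T hT
  obtain ⟨K, hK⟩ :=
    isCompact_Icc.exists_bound_of_continuousOn (s := Icc 0 T) (hB.add hC).continuousOn
  refine posSemidef_of_forall_posDef_add_smul_one fun η hη => ?_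
  set c := Fintype.card n * K + 1
  have := posDef_add_exp_smul_one_of_hasDerivAt_sylvester hΔsymm hN hΔ h0 hK (lt_add_one _)
    (div_pos hη (Real.exp_pos (c * T))) T ⟨hT, le_rfl⟩
  rwa [div_mul_cancel₀ _ (Real.exp_pos _).ne'] at this

end Sylvester

lemma riccati_sub_riccati_s12 {R : Type*} [Ring R] (A A' P₁ P₂ S₁ S₂ Q₁ Q₂ : R) :
    (A * P₂ + P₂ * A' - P₂ * S₂ * P₂ + Q₂) - (A * P₁ + P₁ * A' - P₁ * S₁ * P₁ + Q₁) =
      (A - P₂ * S₂) * (P₂ - P₁) + (P₂ - P₁) * (A' - S₂ * P₁) +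
        (P₁ * (S₁ - S₂) * P₁ + (Q₂ - Q₁)) := by
  noncomm_ring

theorem riccati_flow_parameter_monotone_general (r : ℕ)
    (A : ℝ → Matrix (Fin r) (Fin r) ℝ) (hAcont : Continuous A)
    (S1 S2 : ℝ → Matrix (Fin r) (Fin r) ℝ)
    (hS2cont : Continuous S2)
    (hS12 : ∀ t : ℝ, (S1 t - S2 t).PosSemidef)
    (R11 R12 : Matrix (Fin r) (Fin r) ℝ)
    (hR112 : (R12 - R11).PosSemidef)
    (Q : Matrix (Fin r) (Fin r) ℝ)
    (φ1 φ2 : ℝ → Matrix (Fin r) (Fin r) ℝ)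
    (hφ1sym : ∀ t : ℝ, (φ1 t).IsSymm) (hφ2sym : ∀ t : ℝ, (φ2 t).IsSymm)
    (hφ10 : φ1 0 = Q) (hφ20 : φ2 0 = Q)
    (hφ1 : ∀ t : ℝ, HasDerivAt φ1
      (A t * φ1 t + φ1 t * (A t)ᵀ - φ1 t * S1 t * φ1 t + R11) t)
    (hφ2 : ∀ t : ℝ, HasDerivAt φ2
      (A t * φ2 t + φ2 t * (A t)ᵀ - φ2 t * S2 t * φ2 t + R12) t) :
    ∀ t : ℝ, 0 ≤ t → (φ2 t - φ1 t).PosSemidef := by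
  have hφ1c : Continuous φ1 := continuous_iff_continuousAt.2 fun t => (hφ1 t).continuousAt
  have hφ2c : Continuous φ2 := continuous_iff_continuousAt.2 fun t => (hφ2 t).continuousAt
  refine posSemidef_of_hasDerivAt_sylvester (B := fun t => A t - φ2 t * S2 t)
    (C := fun t => (A t)ᵀ - S2 t * φ1 t)
    (N := fun t => φ1 t * (S1 t - S2 t) * φ1 t + (R12 - R11))
    (hAcont.sub (hφ2c.matrix_mul hS2cont))
    (hAcont.matrix_transpose.sub (hS2cont.matrix_mul hφ1c))
    (fun t => (hφ2sym t).sub (hφ1sym t)) (fun t _ => ?_) (fun t => ?_)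
    (by simp [hφ10, hφ20, PosSemidef.zero])
  · have hconj := (hS12 t).mul_mul_conjTranspose_same (φ1 t)
    rw [conjTranspose_eq_transpose_of_trivial, (hφ1sym t).eq] at hconj
    exact hconj.add hR112
  · exact ((hφ2 t).sub (hφ1 t)).congr_deriv (riccati_sub_riccati_s12 ..)

/-- Monotone dependence of the Riccati flow on the parameters: if `R1(2) ≥ R1(1) > 0`
and `S_t(1) ≥ S_t(2) ≥ 0`, then the corresponding Riccati flows with common
positive definite initial condition `Q` satisfy `φ_t(Q,2) ≥ φ_t(Q,1)` for all `t ≥ 0`. -/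
theorem riccati_flow_parameter_monotone (r : ℕ)
    (A : ℝ → Matrix (Fin r) (Fin r) ℝ) (hAcont : Continuous A)
    (S1 S2 : ℝ → Matrix (Fin r) (Fin r) ℝ)
    (hS1cont : Continuous S1) (hS2cont : Continuous S2)
    (hS2 : ∀ t : ℝ, (S2 t).PosSemidef)
    (hS12 : ∀ t : ℝ, (S1 t - S2 t).PosSemidef)
    (R11 R12 : Matrix (Fin r) (Fin r) ℝ)
    (hR11 : R11.PosDef) (hR12 : R12.PosDef)
    (hR112 : (R12 - R11).PosSemidef)
    (Q : Matrix (Fin r) (Fin r) ℝ) (hQ : Q.PosDef)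
    (φ1 φ2 : ℝ → Matrix (Fin r) (Fin r) ℝ)
    (hφ1sym : ∀ t : ℝ, (φ1 t).IsSymm) (hφ2sym : ∀ t : ℝ, (φ2 t).IsSymm)
    (hφ10 : φ1 0 = Q) (hφ20 : φ2 0 = Q)
    (hφ1 : ∀ t : ℝ, HasDerivAt φ1
      (A t * φ1 t + φ1 t * (A t)ᵀ - φ1 t * S1 t * φ1 t + R11) t)
    (hφ2 : ∀ t : ℝ, HasDerivAt φ2
      (A t * φ2 t + φ2 t * (A t)ᵀ - φ2 t * S2 t * φ2 t + R12) t) :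
    ∀ t : ℝ, 0 ≤ t → (φ2 t - φ1 t).PosSemidef :=
  riccati_flow_parameter_monotone_general r A hAcont S1 S2 hS2cont hS12 R11 R12 hR112 Q φ1 φ2 hφ1sym
    hφ2sym hφ10 hφ20 hφ1 hφ2
end

section
/- Let P be a symmetric positive definite solution of the algebraic Riccati equation A P + P A' − P S P + R1 = 0 with S positive semi-definite and R1 positive definite, and let κ, ν > 0 satisfy ‖exp(t(A−PS))‖₂ ≤ κ e^{−νt} for all t ≥ 0. Then the time-invariant Riccati flow φ_t(Q) with φ_0(Q)=Q > 0 satisfies φ_t(Q) ≤ P + e^{t(A−PS)}(Q−P)e^{t(A−PS)'} for all t ≥ 0, and hence ‖φ_t(Q)‖₂ ≤ ‖P‖₂ + κ² ‖Q−P‖₂ uniformly in t. -/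
/-!
With `M = A - P S`, the algebraic Riccati equation turns the flow into an equation for
`D = φ - P` without constant term: `D' = M D + D Mᵀ - D S D`. Along
`u ↦ e^{(t-u)M} D_u e^{(t-u)Mᵀ}` the linear terms cancel, leaving the derivative
`-e^{(t-u)M} D S D e^{(t-u)Mᵀ} ≤ 0`; comparing `u = 0` with `u = t` gives
`φ_t - P ≤ e^{tM} (Q - P) e^{tMᵀ}`. The flow stays symmetric (Grönwall) and positive definite
(`R1 > 0` pushes it back into the cone), so `0 ≤ φ_t ≤ P + e^{tM} (Q - P) e^{tMᵀ}`, and the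
spectral norm is monotone on positive semidefinite matrices.
-/

open Matrix

attribute [local instance] Matrix.normedAddCommGroup Matrix.normedSpace

open Filter Set Topology

theorem HasDerivAt.nonpos_of_eventually_le_left {f : ℝ → ℝ} {f' c : ℝ} (hf : HasDerivAt f f' c)
    (h : ∀ᶠ u in 𝓝[<] c, f c ≤ f u) : f' ≤ 0 := by
  refine le_of_tendsto ((hasDerivAt_iff_tendsto_slope.mp hf).mono_left (nhdsLT_le_nhdsNE c)) ?_
  filter_upwards [h, self_mem_nhdsWithin] with u hu (huc : u < c)
  rw [slope_def_field]
  exact div_nonpos_of_nonneg_of_nonpos (sub_nonneg.mpr hu) (sub_nonpos.mpr huc.le)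

namespace Matrix

variable {n : Type*} [Fintype n]

theorem _root_.HasDerivAt.matrix_transpose_s16 {f : ℝ → Matrix n n ℝ} {f' : Matrix n n ℝ} {t : ℝ}
    (hf : HasDerivAt f f' t) : HasDerivAt (fun s => (f s)ᵀ) f'ᵀ t :=
  (transposeLinearEquiv n n ℝ ℝ).toLinearMap.toContinuousLinearMap.hasFDerivAt.comp_hasDerivAt t hf

theorem _root_.HasDerivAt.dotProduct_mulVec {f : ℝ → Matrix n n ℝ} {f' : Matrix n n ℝ} {t : ℝ}
    (hf : HasDerivAt f f' t) (x : n → ℝ) :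
    HasDerivAt (fun s => x ⬝ᵥ f s *ᵥ x) (x ⬝ᵥ f' *ᵥ x) t :=
  let q : Matrix n n ℝ →ₗ[ℝ] ℝ :=
    { toFun := fun M => x ⬝ᵥ M *ᵥ x
      map_add' := fun M N => by simp only [add_mulVec, dotProduct_add]
      map_smul' := fun c M => by simp only [smul_mulVec, dotProduct_smul, RingHom.id_apply] }
  q.toContinuousLinearMap.hasFDerivAt.comp_hasDerivAt t hf

theorem isOpen_setOf_forall_dotProduct_mulVec_pos :
    IsOpen {M : Matrix n n ℝ | ∀ x ≠ 0, 0 < x ⬝ᵥ M *ᵥ x} := by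
  have hsphere : {M : Matrix n n ℝ | ∀ x ≠ 0, 0 < x ⬝ᵥ M *ᵥ x} =
      {M | ∀ y ∈ Metric.sphere (0 : n → ℝ) 1, 0 < y ⬝ᵥ M *ᵥ y} := by
    ext M
    refine ⟨fun h y hy => h y (ne_zero_of_mem_unit_sphere ⟨y, hy⟩), fun h x hx => ?_⟩
    have hy := h (‖x‖⁻¹ • x) (by simp [norm_smul, hx])
    simp only [mulVec_smul, dotProduct_smul, smul_dotProduct, smul_eq_mul] at hy
    exact pos_of_mul_pos_right (pos_of_mul_pos_right hy (by positivity)) (by positivity)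
  rw [hsphere, isOpen_iff_eventually]
  intro M hM
  refine (isCompact_sphere 0 1).eventually_forall_of_forall_eventually fun y hy => ?_
  have hq : Continuous fun p : Matrix n n ℝ × (n → ℝ) => p.2 ⬝ᵥ p.1 *ᵥ p.2 := by fun_prop
  exact hq.continuousAt.eventually (lt_mem_nhds (hM y hy))

theorem dotProduct_mulVec_riccati_of_mulVec_eq_zero {A S R M : Matrix n n ℝ} {x : n → ℝ}
    (hM : M.IsHermitian) (hx : M *ᵥ x = 0) :
    x ⬝ᵥ (A * M + M * Aᵀ - M * S * M + R) *ᵥ x = x ⬝ᵥ R *ᵥ x := by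
  have hx' : x ᵥ* M = 0 := by
    rw [← (isHermitian_iff_isSymm.1 hM).eq, vecMul_transpose, hx]
  simp [add_mulVec, sub_mulVec, ← mulVec_mulVec, hx, dotProduct_mulVec, hx']

theorem riccati_sub_fixedPoint {A S R P X : Matrix n n ℝ} (hS : S.IsHermitian)
    (hP : P.IsHermitian) (hare : A * P + P * Aᵀ - P * S * P + R = 0) :
    A * X + X * Aᵀ - X * S * X + R =
      (A - P * S) * (X - P) + (X - P) * (A - P * S)ᵀ - (X - P) * S * (X - P) := by
  rw [isHermitian_iff_isSymm] at hS hP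
  rw [eq_neg_of_add_eq_zero_right hare, transpose_sub, transpose_mul, hS.eq, hP.eq]
  noncomm_ring

theorem riccati_posDef {A S R : Matrix n n ℝ} {φ : ℝ → Matrix n n ℝ} (hR : R.PosDef)
    (hφ0 : (φ 0).PosDef) (hsymm : ∀ t, 0 ≤ t → (φ t).IsHermitian)
    (hφ : ∀ t, HasDerivAt φ (A * φ t + φ t * Aᵀ - φ t * S * φ t + R) t)
    {t : ℝ} (ht : 0 ≤ t) : (φ t).PosDef := by
  set Pos := {M : Matrix n n ℝ | ∀ x ≠ 0, 0 < x ⬝ᵥ M *ᵥ x}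
  have hpos : ∀ {M}, M ∈ Pos → ∀ x, 0 ≤ x ⬝ᵥ M *ᵥ x := fun hM x => by
    rcases eq_or_ne x 0 with rfl | hx
    · simp
    · exact (hM x hx).le
  -- At the first time `c` where positivity fails, `φ c` is singular and positive semidefinite;
  -- along a kernel vector `x` the quadratic form has derivative `x ⬝ R x > 0` but is positive
  -- just before `c` and zero at `c`.
  suffices φ t ∈ Pos from
    posDef_iff_dotProduct_mulVec.2 ⟨hsymm t ht, fun x hx => by simpa using this x hx⟩
  by_contra hnot
  have hcont : Continuous φ := continuous_iff_continuousAt.2 fun u => (hφ u).continuousAt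
  set Z := Ici 0 ∩ φ ⁻¹' Posᶜ
  have hZ : IsClosed Z :=
    isClosed_Ici.inter (isOpen_setOf_forall_dotProduct_mulVec_pos.preimage hcont).isClosed_compl
  have hbdd : BddBelow Z := ⟨0, fun u hu => hu.1⟩
  have hc : sInf Z ∈ Z := hZ.csInf_mem ⟨t, ht, hnot⟩ hbdd
  set c := sInf Z
  have hbefore : ∀ u ∈ Ico 0 c, φ u ∈ Pos := fun u hu =>
    by_contra fun h => hu.2.not_ge (csInf_le hbdd ⟨hu.1, h⟩)
  have hc0 : 0 < c := lt_of_le_of_ne hc.1 fun h =>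
    hc.2 (h ▸ fun x hx => by simpa using hφ0.dotProduct_mulVec_pos hx)
  have hleft : ∀ y, ∀ᶠ u in 𝓝[<] c, 0 ≤ y ⬝ᵥ φ u *ᵥ y := fun y => by
    filter_upwards [Ioo_mem_nhdsLT hc0] with u hu using hpos (hbefore u ⟨hu.1.le, hu.2⟩) y
  have hpsd : (φ c).PosSemidef := by
    refine PosSemidef.of_dotProduct_mulVec_nonneg (hsymm c hc.1) fun y => ?_
    simpa using ge_of_tendsto (((hφ c).dotProduct_mulVec y).continuousAt.tendsto.mono_left
      nhdsWithin_le_nhds) (hleft y)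
  obtain ⟨x, hx0, hxc⟩ : ∃ x ≠ 0, x ⬝ᵥ φ c *ᵥ x ≤ 0 := by simpa [Pos] using hc.2
  have hxc0 : x ⬝ᵥ φ c *ᵥ x = 0 := le_antisymm hxc (by simpa using hpsd.dotProduct_mulVec_nonneg x)
  have hker : φ c *ᵥ x = 0 := (hpsd.dotProduct_mulVec_zero_iff x).1 (by simpa using hxc0)
  have hderiv := (hφ c).dotProduct_mulVec x
  rw [dotProduct_mulVec_riccati_of_mulVec_eq_zero (hsymm c hc.1) hker] at hderiv
  have := hderiv.nonpos_of_eventually_le_left (by simpa [hxc0] using hleft x)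
  exact this.not_gt (by simpa using hR.dotProduct_mulVec_pos hx0)

variable [DecidableEq n]

open scoped Matrix.Norms.L2Operator MatrixOrder

theorem eq_zero_of_hasDerivAt_eq_mul_add_mul {X B C : ℝ → Matrix n n ℝ}
    (hB : Continuous B) (hC : Continuous C) (hX : ∀ t, HasDerivAt X (B t * X t + X t * C t) t)
    (hX0 : X 0 = 0) {t : ℝ} (ht : 0 ≤ t) : X t = 0 := by
  obtain ⟨K, hK⟩ := (isCompact_Icc (a := 0) (b := t)).exists_bound_of_continuousOn
    (f := fun s => ‖B s‖ + ‖C s‖) (by fun_prop)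
  refine eq_zero_of_abs_deriv_le_mul_abs_self_of_eq_zero_right (K := K)
    (fun s _ => (hX s).continuousAt.continuousWithinAt) (fun s _ => (hX s).hasDerivWithinAt)
    hX0 (fun s hs => ?_) t ⟨ht, le_rfl⟩
  calc ‖B s * X s + X s * C s‖ ≤ (‖B s‖ + ‖C s‖) * ‖X s‖ := by
        grw [norm_add_le, norm_mul_le, norm_mul_le]
        linarith
    _ ≤ K * ‖X s‖ := by
        gcongr
        exact (le_abs_self _).trans (hK s (Ico_subset_Icc_self hs))

theorem l2_opNorm_le_of_nonneg_of_le {M B : Matrix n n ℝ} (hM : 0 ≤ M) (hMB : M ≤ B) :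
    ‖M‖ ≤ ‖B‖ := by
  have hMpos : (toEuclideanLin M).IsPositive :=
    isPositive_toEuclideanLin_iff.mpr (nonneg_iff_posSemidef.mp hM)
  have hBMpos : (toEuclideanLin (B - M)).IsPositive := isPositive_toEuclideanLin_iff.mpr hMB
  set TM := LinearMap.toContinuousLinearMap (toEuclideanLin M)
  set TB := LinearMap.toContinuousLinearMap (toEuclideanLin B)
  change ‖TM‖ ≤ ‖TB‖
  rw [TM.norm_eq_iSup_rayleighQuotient hMpos.isSymmetric]
  refine ciSup_le fun x => ?_
  have h0 : 0 ≤ TM.reApplyInnerSelf x := hMpos.re_inner_nonneg_left x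
  have h1 : TM.reApplyInnerSelf x ≤ TB.reApplyInnerSelf x := by
    have := hBMpos.re_inner_nonneg_left x
    simp only [map_sub, LinearMap.sub_apply, inner_sub_left] at this
    simp only [ContinuousLinearMap.reApplyInnerSelf_apply, TM, TB,
      LinearMap.coe_toContinuousLinearMap']
    linarith
  calc |TM.rayleighQuotient x| = TM.rayleighQuotient x := abs_of_nonneg (by positivity)
    _ ≤ TB.rayleighQuotient x := div_le_div_of_nonneg_right h1 (by positivity)
    _ ≤ ‖TB‖ := (le_abs_self _).trans (TB.rayleighQuotient_le_norm x)

theorem riccati_isHermitian {A S R : Matrix n n ℝ} {φ : ℝ → Matrix n n ℝ} (hS : S.IsHermitian)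
    (hR : R.IsHermitian) (hφ0 : (φ 0).IsHermitian)
    (hφ : ∀ t, HasDerivAt φ (A * φ t + φ t * Aᵀ - φ t * S * φ t + R) t)
    {t : ℝ} (ht : 0 ≤ t) : (φ t).IsHermitian := by
  rw [isHermitian_iff_isSymm] at hS hR hφ0 ⊢
  have hcont : Continuous φ := continuous_iff_continuousAt.2 fun u => (hφ u).continuousAt
  have hskew := eq_zero_of_hasDerivAt_eq_mul_add_mul (X := fun u => (φ u)ᵀ - φ u)
    (B := fun u => A - φ u * S) (C := fun u => (A - φ u * S)ᵀ) (by fun_prop) (by fun_prop)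
    (fun u => ((hφ u).matrix_transpose_s16.sub (hφ u)).congr_deriv (by
      simp only [transpose_add, transpose_sub, transpose_mul, transpose_transpose, hS.eq, hR.eq]
      noncomm_ring))
    (sub_eq_zero.2 hφ0.eq) ht
  exact sub_eq_zero.1 hskew

theorem riccati_le_exp_conj {M S : Matrix n n ℝ} {D : ℝ → Matrix n n ℝ} (hS : S.PosSemidef)
    (hD : ∀ u, HasDerivAt D (M * D u + D u * Mᵀ - D u * S * D u) u)
    (hsymm : ∀ u, 0 ≤ u → (D u).IsHermitian) {t : ℝ} (ht : 0 ≤ t) :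
    D t ≤ NormedSpace.exp (t • M) * D 0 * (NormedSpace.exp (t • M))ᵀ := by
  set E : ℝ → Matrix n n ℝ := fun u => NormedSpace.exp ((t - u) • M)
  set F : ℝ → Matrix n n ℝ := fun u => NormedSpace.exp ((t - u) • Mᵀ)
  have hFE : ∀ u, F u = (E u)ᴴ := fun u => by
    simp only [F, E, conjTranspose_eq_transpose_of_trivial, ← exp_transpose, transpose_smul]
  have hE : ∀ u, HasDerivAt E (-(E u * M)) u := fun u => by
    simpa [Function.comp_def] using
      (hasDerivAt_exp_smul_const M (t - u)).scomp u ((hasDerivAt_id u).const_sub t)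
  have hF : ∀ u, HasDerivAt F (-(Mᵀ * F u)) u := fun u => by
    simpa [Function.comp_def] using
      (hasDerivAt_exp_smul_const' Mᵀ (t - u)).scomp u ((hasDerivAt_id u).const_sub t)
  set G : ℝ → Matrix n n ℝ := fun u => E u * D u * F u
  have hG : ∀ u, HasDerivAt G (-(E u * (D u * S * D u) * F u)) u := fun u => by
    refine (((hE u).mul (hD u)).mul (hF u)).congr_deriv ?_
    simp only [Pi.mul_apply]
    noncomm_ring
  have hanti : ∀ x, AntitoneOn (fun u => x ⬝ᵥ G u *ᵥ x) (Icc 0 t) := fun x => by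
    refine antitoneOn_of_hasDerivWithinAt_nonpos (convex_Icc 0 t)
      (fun u _ => ((hG u).dotProduct_mulVec x).continuousAt.continuousWithinAt)
      (fun u _ => ((hG u).dotProduct_mulVec x).hasDerivWithinAt) fun u hu => ?_
    rw [interior_Icc] at hu
    have hconj : E u * (D u * S * D u) * F u = E u * D u * S * (E u * D u)ᴴ := by
      rw [conjTranspose_mul, hFE, (hsymm u hu.1.le).eq]
      noncomm_ring
    rw [hconj, neg_mulVec, dotProduct_neg, neg_nonpos]
    simpa using (hS.mul_mul_conjTranspose_same (E u * D u)).dotProduct_mulVec_nonneg x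
  have hG0 : G 0 = NormedSpace.exp (t • M) * D 0 * (NormedSpace.exp (t • M))ᴴ := by
    simp only [G, hFE, sub_zero, E]
  have hGt : G t = D t := by simp [G, E, F]
  rw [← conjTranspose_eq_transpose_of_trivial, ← hG0, le_iff]
  refine PosSemidef.of_dotProduct_mulVec_nonneg
    (hG0 ▸ (isHermitian_mul_mul_conjTranspose _ (hsymm 0 le_rfl)).sub (hsymm t ht)) fun x => ?_
  have := hanti x ⟨le_rfl, ht⟩ ⟨ht, le_rfl⟩ ht
  simp only [hGt] at this
  simpa [sub_mulVec] using this

end Matrix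

open scoped Matrix.Norms.L2Operator MatrixOrder in
theorem specNorm_le_of_le_add_mul_mul_transpose {r : ℕ} {Φ P E X : Matrix (Fin r) (Fin r) ℝ}
    (hΦ : 0 ≤ Φ) (h : Φ ≤ P + E * X * Eᵀ) :
    specNorm Φ ≤ specNorm P + specNorm E ^ 2 * specNorm X := by
  change ‖Φ‖ ≤ ‖P‖ + ‖E‖ ^ 2 * ‖X‖
  calc ‖Φ‖ ≤ ‖P + E * X * Eᵀ‖ := l2_opNorm_le_of_nonneg_of_le hΦ h
    _ ≤ ‖P‖ + ‖E‖ * ‖X‖ * ‖Eᵀ‖ := by grw [norm_add_le, l2_opNorm_mul, l2_opNorm_mul]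
    _ = ‖P‖ + ‖E‖ ^ 2 * ‖X‖ := by
      rw [← conjTranspose_eq_transpose_of_trivial, l2_opNorm_conjTranspose]
      ring

/-- Uniform bound for the time-invariant Riccati flow in terms of the fixed point `P` of
the algebraic Riccati equation: `φ_t(Q) ≤ P + e^{t(A−PS)}(Q−P)e^{t(A−PS)ᵀ}` and hence
`‖φ_t(Q)‖₂ ≤ ‖P‖₂ + κ² ‖Q−P‖₂`. -/
theorem riccati_flow_uniform_bound (r : ℕ)
    (A S R1 : Matrix (Fin r) (Fin r) ℝ)
    (hS : S.PosSemidef) (hR1 : R1.PosDef)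
    (P : Matrix (Fin r) (Fin r) ℝ) (hP : P.PosDef)
    (hare : A * P + P * Aᵀ - P * S * P + R1 = 0)
    (κ ν : ℝ) (hκ : 0 < κ) (hν : 0 < ν)
    (hdecay : ∀ t : ℝ, 0 ≤ t →
      specNorm (NormedSpace.exp (t • (A - P * S))) ≤ κ * Real.exp (-ν * t))
    (Q : Matrix (Fin r) (Fin r) ℝ) (hQ : Q.PosDef)
    (φ : ℝ → Matrix (Fin r) (Fin r) ℝ)
    (hφ0 : φ 0 = Q)
    (hφ : ∀ t : ℝ, HasDerivAt φ (A * φ t + φ t * Aᵀ - φ t * S * φ t + R1) t) :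
    ∀ t : ℝ, 0 ≤ t →
      (P + NormedSpace.exp (t • (A - P * S)) * (Q - P) *
          (NormedSpace.exp (t • (A - P * S)))ᵀ - φ t).PosSemidef ∧
      specNorm (φ t) ≤ specNorm P + κ ^ 2 * specNorm (Q - P) := by
  intro t ht
  set E := NormedSpace.exp (t • (A - P * S))
  have hsymm : ∀ u, 0 ≤ u → (φ u).IsHermitian := fun u hu =>
    riccati_isHermitian hS.isHermitian hR1.isHermitian (hφ0 ▸ hQ.isHermitian) hφ hu
  have hD : ∀ u, HasDerivAt (fun v => φ v - P) ((A - P * S) * (φ u - P) +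
      (φ u - P) * (A - P * S)ᵀ - (φ u - P) * S * (φ u - P)) u := fun u => by
    rw [← riccati_sub_fixedPoint hS.isHermitian hP.isHermitian hare]
    exact (hφ u).sub_const P
  have hbound : (P + E * (Q - P) * Eᵀ - φ t).PosSemidef := by
    have h := le_iff.1 <|
      riccati_le_exp_conj hS hD (fun u hu => (hsymm u hu).sub hP.isHermitian) ht
    rwa [hφ0, sub_sub_eq_add_sub, add_comm _ P] at h
  have hE : specNorm E ≤ κ :=
    (hdecay t ht).trans (mul_le_of_le_one_right hκ.le (Real.exp_le_one_iff.2 (by nlinarith)))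
  refine ⟨hbound, ?_⟩
  calc specNorm (φ t) ≤ specNorm P + specNorm E ^ 2 * specNorm (Q - P) :=
        specNorm_le_of_le_add_mul_mul_transpose (nonneg_iff_posSemidef.2
          (riccati_posDef hR1 (hφ0 ▸ hQ) hsymm hφ ht).posSemidef) hbound
    _ ≤ specNorm P + κ ^ 2 * specNorm (Q - P) := by
        gcongr
        all_goals exact norm_nonneg _
end

section
/- For symmetric real (r×r) matrices A and B with eigenvalues λ_1(A) ≥ … ≥ λ_r(A) and λ_1(B) ≥ … ≥ λ_r(B), one has ∑_{i=1}^r (λ_i(A) − λ_i(B))² ≤ ‖A − B‖_F², where ‖·‖_F is the Frobenius norm (Hoffman–Wielandt inequality for symmetric matrices). -/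
/-!
Diagonalize `A = U diag(α) Uᵀ` and `B = V diag(β) Vᵀ`. With the orthogonal matrix `W = Uᵀ V`,
`‖A - B‖_F² = ∑ i j, W i j ^ 2 * (α i - β j) ^ 2`, and the squares `W i j ^ 2` form a doubly
stochastic matrix. The right-hand side is linear in that matrix, so by Birkhoff's theorem it is at
least its minimum over permutation matrices, `min_π ∑ i, (α i - β (π i)) ^ 2`; by the
rearrangement inequality that minimum is attained when `α` and `β` are paired in sorted order.
-/

open Matrix

/-- The eigenvalues of a real symmetric matrix arranged in non-increasing order:
`sortedEigs hA 0 ≥ sortedEigs hA 1 ≥ …`. -/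
noncomputable def sortedEigs {r : ℕ} {A : Matrix (Fin r) (Fin r) ℝ}
    (hA : A.IsHermitian) : Fin r → ℝ :=
  fun i => (hA.eigenvalues ∘ Tuple.sort hA.eigenvalues) i.rev

section Rearrangement

variable {ι R : Type*} [Fintype ι] [CommRing R] [LinearOrder R] [IsStrictOrderedRing R]

lemma Monovary.sum_sub_sq_le_sum_sub_comp_perm_sq {f g : ι → R} (hfg : Monovary f g)
    (σ : Equiv.Perm ι) : ∑ i, (f i - g i) ^ 2 ≤ ∑ i, (f i - g (σ i)) ^ 2 := by
  have hcross : ∑ i, f i * g (σ i) ≤ ∑ i, f i * g i := hfg.sum_smul_comp_perm_le_sum_smul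
  have hsq : ∑ i, g (σ i) ^ 2 = ∑ i, g i ^ 2 := Equiv.sum_comp σ (fun i => g i ^ 2)
  have expand : ∀ h : ι → R, ∑ i, (f i - h i) ^ 2
      = ∑ i, f i ^ 2 + ∑ i, h i ^ 2 - 2 * ∑ i, f i * h i := fun h => by
    simp only [sub_sq, Finset.sum_add_distrib, Finset.sum_sub_distrib, mul_assoc,
      ← Finset.mul_sum]
    ring
  have hσ := expand fun i => g (σ i)
  beta_reduce at hσ
  linarith [expand g]

lemma sum_comp_sub_comp_sq_le_of_monovary {a b : ι → R} {σ τ : Equiv.Perm ι}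
    (h : Monovary (a ∘ σ) (b ∘ τ)) (π : Equiv.Perm ι) :
    ∑ i, (a (σ i) - b (τ i)) ^ 2 ≤ ∑ i, (a i - b (π i)) ^ 2 := by
  calc ∑ i, (a (σ i) - b (τ i)) ^ 2
      ≤ ∑ i, (a (σ i) - b (τ ((τ⁻¹ * π * σ) i))) ^ 2 :=
        h.sum_sub_sq_le_sum_sub_comp_perm_sq _
    _ = ∑ i, (a i - b (π i)) ^ 2 := by
        simp only [Equiv.Perm.mul_apply, Equiv.Perm.inv_def, Equiv.apply_symm_apply]
        exact Equiv.sum_comp σ (fun i => (a i - b (π i)) ^ 2)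

end Rearrangement

section DoublyStochastic

variable {n R : Type*} [Fintype n] [DecidableEq n]

lemma sum_permMatrix_mul [NonAssocSemiring R] (σ : Equiv.Perm n) (c : n → n → R) :
    ∑ i, ∑ j, σ.permMatrix R i j * c i j = ∑ i, c i (σ i) := by
  simp [Equiv.toPEquiv_apply]

variable [Field R] [LinearOrder R] [IsStrictOrderedRing R]

lemma le_sum_mul_of_mem_doublyStochastic {S : Matrix n n R} (hS : S ∈ doublyStochastic R n)
    {c : n → n → R} {m : R} (hc : ∀ σ : Equiv.Perm n, m ≤ ∑ i, c i (σ i)) :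
    m ≤ ∑ i, ∑ j, S i j * c i j := by
  have hlin : IsLinearMap R fun S : Matrix n n R => ∑ i, ∑ j, S i j * c i j :=
    ⟨fun S T => by simp only [Matrix.add_apply, add_mul, Finset.sum_add_distrib],
     fun r S => by simp only [Matrix.smul_apply, smul_eq_mul, mul_assoc, Finset.mul_sum]⟩
  rw [SetLike.mem_coe.symm, doublyStochastic_eq_convexHull_permMatrix] at hS
  refine convexHull_min ?_ (convex_halfSpace_ge hlin m) hS
  rintro _ ⟨σ, rfl⟩
  simpa only [Set.mem_ofPred_eq, sum_permMatrix_mul] using hc σ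

lemma map_sq_mem_doublyStochastic {W : Matrix n n R} (hW : W ∈ orthogonalGroup n R) :
    W.map (· ^ 2) ∈ doublyStochastic R n := by
  have hrow := congrFun₂ ((mem_orthogonalGroup_iff n R).mp hW)
  have hcol := congrFun₂ ((mem_orthogonalGroup_iff' n R).mp hW)
  refine (mem_doublyStochastic_iff_sum).mpr ⟨fun i j => sq_nonneg _, fun i => ?_, fun j => ?_⟩
  · simpa [mul_apply, sq] using hrow i i
  · simpa [mul_apply, sq] using hcol j j

end DoublyStochastic

section Frobenius

variable {m n p : Type*} [Fintype m] [Fintype n] [Fintype p]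

lemma trace_conjTranspose_mul_self_eq_sum_sq {R : Type*} [CommRing R] [StarRing R]
    [TrivialStar R] (X : Matrix m p R) :
    trace (Xᴴ * X) = ∑ i, ∑ j, X i j ^ 2 := by
  simp only [trace, diag_apply, mul_apply, conjTranspose_apply, star_trivial, sq]
  exact Finset.sum_comm

variable [DecidableEq m] [DecidableEq n] [DecidableEq p]

lemma trace_conjTranspose_mul_self_unitary_mul_mul {R : Type*} [CommRing R] [StarRing R]
    {U : Matrix m m R} {V : Matrix p p R} (hU : U ∈ unitaryGroup m R)
    (hV : V ∈ unitaryGroup p R) (X : Matrix m p R) :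
    trace ((U * X * V)ᴴ * (U * X * V)) = trace (Xᴴ * X) := by
  have hUU : Uᴴ * U = 1 := mem_unitaryGroup_iff'.mp hU
  have hVV : V * Vᴴ = 1 := mem_unitaryGroup_iff.mp hV
  calc trace ((U * X * V)ᴴ * (U * X * V))
      = trace (Vᴴ * (Xᴴ * (Uᴴ * U) * X) * V) := by
        simp only [conjTranspose_mul, Matrix.mul_assoc]
    _ = trace (V * Vᴴ * (Xᴴ * X)) := by
        rw [hUU, Matrix.mul_one, trace_mul_comm, ← Matrix.mul_assoc]
    _ = trace (Xᴴ * X) := by rw [hVV, Matrix.one_mul]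

/-- `U diag(a) Uᴴ - V diag(b) Vᴴ = U (diag(a) W - W diag(b)) Vᴴ` with `W = Uᴴ V`, and the middle
factor has entries `(a i - b j) * W i j`. -/
lemma trace_conjTranspose_mul_self_sub_conj_diagonal {U V : Matrix n n ℝ}
    (hU : U ∈ unitaryGroup n ℝ) (hV : V ∈ unitaryGroup n ℝ) (a b : n → ℝ) :
    trace ((U * diagonal a * star U - V * diagonal b * star V)ᴴ *
        (U * diagonal a * star U - V * diagonal b * star V)) =
      ∑ i, ∑ j, (star U * V) i j ^ 2 * (a i - b j) ^ 2 := by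
  set W := star U * V
  have hconj : U * diagonal a * star U - V * diagonal b * star V
      = U * (diagonal a * W - W * diagonal b) * star V := by
    have hUU : U * star U = 1 := mem_unitaryGroup_iff.mp hU
    have hVV : V * star V = 1 := mem_unitaryGroup_iff.mp hV
    simp only [W, Matrix.mul_sub, Matrix.sub_mul, Matrix.mul_assoc, hVV, Matrix.mul_one]
    simp only [← Matrix.mul_assoc, hUU, Matrix.one_mul]
  rw [hconj, trace_conjTranspose_mul_self_unitary_mul_mul hU (Unitary.star_mem hV),
    trace_conjTranspose_mul_self_eq_sum_sq]
  refine Finset.sum_congr rfl fun i _ => Finset.sum_congr rfl fun j _ => ?_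
  simp only [Matrix.sub_apply, diagonal_mul, mul_diagonal]
  ring

lemma Matrix.IsHermitian.eq_mul_diagonal_mul_star {A : Matrix n n ℝ} (hA : A.IsHermitian) :
    A = (hA.eigenvectorUnitary : Matrix n n ℝ) * diagonal hA.eigenvalues *
      star (hA.eigenvectorUnitary : Matrix n n ℝ) := by
  simpa [RCLike.ofReal_real_eq_id] using hA.spectral_theorem

lemma Matrix.IsHermitian.trace_transpose_mul_self_sub {A B : Matrix n n ℝ}
    (hA : A.IsHermitian) (hB : B.IsHermitian) :
    trace ((A - B)ᵀ * (A - B)) =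
      ∑ i, ∑ j, (star (hA.eigenvectorUnitary : Matrix n n ℝ) * hB.eigenvectorUnitary) i j ^ 2 *
        (hA.eigenvalues i - hB.eigenvalues j) ^ 2 := by
  rw [← conjTranspose_eq_transpose_of_trivial]
  conv_lhs => rw [hA.eq_mul_diagonal_mul_star, hB.eq_mul_diagonal_mul_star]
  exact trace_conjTranspose_mul_self_sub_conj_diagonal hA.eigenvectorUnitary.2
    hB.eigenvectorUnitary.2 _ _

end Frobenius

lemma sortedEigs_eq_comp {r : ℕ} {A : Matrix (Fin r) (Fin r) ℝ} (hA : A.IsHermitian) :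
    sortedEigs hA = hA.eigenvalues ∘ Fin.revPerm.trans (Tuple.sort hA.eigenvalues) :=
  rfl

lemma antitone_sortedEigs {r : ℕ} {A : Matrix (Fin r) (Fin r) ℝ} (hA : A.IsHermitian) :
    Antitone (sortedEigs hA) := fun _ _ hij =>
  Tuple.monotone_sort hA.eigenvalues (Fin.rev_le_rev.mpr hij)

/-- Hoffman–Wielandt inequality for real symmetric matrices: if `λ_1(A) ≥ … ≥ λ_r(A)` and
`λ_1(B) ≥ … ≥ λ_r(B)` are the ordered eigenvalues, then
`∑ i (λ_i(A) − λ_i(B))² ≤ ‖A − B‖_F² = tr((A−B)ᵀ(A−B))`. -/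
theorem hoffman_wielandt_symmetric (r : ℕ) (A B : Matrix (Fin r) (Fin r) ℝ)
    (hA : A.IsHermitian) (hB : B.IsHermitian) :
    ∑ i : Fin r, (sortedEigs hA i - sortedEigs hB i) ^ 2 ≤
      Matrix.trace ((A - B)ᵀ * (A - B)) := by
  have hW : star (hA.eigenvectorUnitary : Matrix (Fin r) (Fin r) ℝ) * hB.eigenvectorUnitary ∈
      orthogonalGroup (Fin r) ℝ :=
    mul_mem (Unitary.star_mem hA.eigenvectorUnitary.2) hB.eigenvectorUnitary.2
  rw [hA.trace_transpose_mul_self_sub hB]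
  refine le_sum_mul_of_mem_doublyStochastic (map_sq_mem_doublyStochastic hW) fun π => ?_
  have hmono := (antitone_sortedEigs hA).monovary (antitone_sortedEigs hB)
  rw [sortedEigs_eq_comp hA, sortedEigs_eq_comp hB] at hmono ⊢
  exact sum_comp_sub_comp_sq_le_of_monovary hmono π
end
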